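/- In the ring R_2 = Z_4[ω]/(ω²−2), for every zero divisor x, the multiplicative order of x+1 equals the additive order of x. -/

import Mathlib

/-!
The non-units of `R₂` are the multiples of `ω`, and `ω` behaves like a uniformizer:
`ω² = 2`, `ω⁴ = 4 = 0`, `ω³ ≠ 0`. Both orders therefore divide `4`, and it remains to compare
`(ωy + 1)² = 1` with `2ωy = 0`. Writing `(ωy + 1)² - 1 = ω²·y(ω + y)` and `2ωy = ω³y`, both
vanish when `ω ∣ y` (they lie in `(ω⁴)`), and neither does otherwise, because then `y` and
`ω + y` are units.
-/

open Polynomial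

/-- The ring `Z₄[ω]` with `ω² = a + bω`, i.e. `Z₄[X]/(X² − (a + bX))`. -/
abbrev Rring (a b : ZMod 4) := AdjoinRoot ((X : (ZMod 4)[X]) ^ 2 - (C a + C b * X))

/-- The element `ω` of `Rring a b`. -/
noncomputable abbrev w (a b : ZMod 4) : Rring a b := AdjoinRoot.root _

theorem orderOf_eq_addOrderOf_of_forall_dvd {M A : Type*} [Monoid M] [AddMonoid A] {g : M}
    {a : A} {N : ℕ} (ha : N • a = 0) (h : ∀ d, d ∣ N → (g ^ d = 1 ↔ d • a = 0)) :
    orderOf g = addOrderOf a := by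
  have hg : g ^ N = 1 := (h N dvd_rfl).2 ha
  refine Nat.dvd_antisymm (orderOf_dvd_of_pow_eq_one ?_) (addOrderOf_dvd_of_nsmul_eq_zero ?_)
  · exact (h _ (addOrderOf_dvd_of_nsmul_eq_zero ha)).2 (addOrderOf_nsmul_eq_zero a)
  · exact (h _ (orderOf_dvd_of_pow_eq_one hg)).1 (pow_orderOf_eq_one g)

section Uniformizer

variable {R : Type*} [CommRing R] {ϖ : R}

theorem isUnit_of_dvd_sub_one (hϖ : IsNilpotent ϖ) {y : R} (h : ϖ ∣ y - 1) : IsUnit y := by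
  obtain ⟨z, hz⟩ := h
  rw [sub_eq_iff_eq_add.1 hz]
  exact ((Commute.all ϖ z).isNilpotent_mul_right hϖ).isUnit_add_one

/-- `hres` says that `R ⧸ (ϖ)` has only the residues `0` and `1`. -/
theorem dvd_of_not_isUnit (hϖ : IsNilpotent ϖ) (hres : ∀ x, ϖ ∣ x ∨ ϖ ∣ x - 1) {x : R}
    (hx : ¬IsUnit x) : ϖ ∣ x :=
  (hres x).resolve_right fun h ↦ hx (isUnit_of_dvd_sub_one hϖ h)

theorem mul_add_one_sq (hsq : ϖ ^ 2 = 2) (y : R) :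
    (ϖ * y + 1) ^ 2 = ϖ ^ 2 * (y * (ϖ + y)) + 1 := by
  linear_combination -ϖ * y * hsq

theorem mul_add_one_sq_eq_one_iff (hsq : ϖ ^ 2 = 2) (h4 : ϖ ^ 4 = 0) (h3 : ϖ ^ 3 ≠ 0)
    (hres : ∀ x, ϖ ∣ x ∨ ϖ ∣ x - 1) (y : R) : (ϖ * y + 1) ^ 2 = 1 ↔ 2 • (ϖ * y) = 0 := by
  have htwo : 2 • (ϖ * y) = ϖ ^ 3 * y := by
    rw [nsmul_eq_mul]
    linear_combination -ϖ * y * hsq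
  rw [mul_add_one_sq hsq, htwo, add_eq_right]
  rcases hres y with ⟨z, rfl⟩ | hy
  · exact iff_of_true (by linear_combination (z + z ^ 2) * h4) (by linear_combination z * h4)
  · have hϖ : IsNilpotent ϖ := ⟨4, h4⟩
    have hyu : IsUnit y := isUnit_of_dvd_sub_one hϖ hy
    have hϖyu : IsUnit (ϖ + y) :=
      isUnit_of_dvd_sub_one hϖ (by simpa only [add_sub_assoc] using (dvd_refl ϖ).add hy)
    rw [(hyu.mul hϖyu).mul_left_eq_zero, hyu.mul_left_eq_zero]
    exact iff_of_false (fun h ↦ h3 (by rw [pow_succ, h, zero_mul])) h3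

theorem mul_add_one_pow_four (hsq : ϖ ^ 2 = 2) (h4 : ϖ ^ 4 = 0) (y : R) :
    (ϖ * y + 1) ^ 4 = 1 := by
  rw [show 4 = 2 * 2 from rfl, pow_mul, mul_add_one_sq hsq]
  linear_combination (y * (ϖ + y) + (y * (ϖ + y)) ^ 2) * h4 - ϖ ^ 2 * (y * (ϖ + y)) * hsq

theorem orderOf_add_one_eq_addOrderOf (hsq : ϖ ^ 2 = 2) (h4 : ϖ ^ 4 = 0) (h3 : ϖ ^ 3 ≠ 0)
    (hres : ∀ x, ϖ ∣ x ∨ ϖ ∣ x - 1) {x : R} (hx : ¬IsUnit x) :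
    orderOf (x + 1) = addOrderOf x := by
  obtain ⟨y, rfl⟩ := dvd_of_not_isUnit ⟨4, h4⟩ hres hx
  have h4x : 4 • (ϖ * y) = 0 := by
    rw [nsmul_eq_mul]
    linear_combination ϖ * y * h4 - (ϖ ^ 2 + 2) * ϖ * y * hsq
  refine orderOf_eq_addOrderOf_of_forall_dvd (N := 2 ^ 2) h4x fun d hd ↦ ?_
  obtain ⟨i, hi, rfl⟩ := (Nat.dvd_prime_pow Nat.prime_two).1 hd
  interval_cases i
  · simp
  · exact mul_add_one_sq_eq_one_iff hsq h4 h3 hres y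
  · exact iff_of_true (mul_add_one_pow_four hsq h4 y) h4x

end Uniformizer

theorem w_sq : w 2 0 ^ 2 = 2 := by
  have := AdjoinRoot.mk_self (f := (X : (ZMod 4)[X]) ^ 2 - (C 2 + C 0 * X))
  simpa [sub_eq_zero, map_ofNat] using this

theorem w_pow_four : w 2 0 ^ 4 = 0 := by
  have h4 : (4 : Rring 2 0) = 0 := by
    rw [← map_ofNat (algebraMap (ZMod 4) (Rring 2 0)) 4]
    exact map_zero _
  linear_combination (w 2 0 ^ 2 + 2) * w_sq + h4

theorem w_pow_three_ne_zero : w 2 0 ^ 3 ≠ 0 := by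
  -- `ω³ = 2ω`, and `2X` is its own remainder modulo the monic `X² - 2`.
  have : Fact (1 < 4) := ⟨by norm_num⟩
  have hf : ((X : (ZMod 4)[X]) ^ 2 - (C 2 + C 0 * X)) = X ^ 2 - C 2 := by simp
  have hmonic : ((X : (ZMod 4)[X]) ^ 2 - (C 2 + C 0 * X)).Monic :=
    hf ▸ monic_X_pow_sub_C 2 two_ne_zero
  have hdeg : (C 2 * X : (ZMod 4)[X]).degree <
      ((X : (ZMod 4)[X]) ^ 2 - (C 2 + C 0 * X)).degree := by
    rw [hf, degree_X_pow_sub_C two_pos]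
    compute_degree!
  have hw3 : w 2 0 ^ 3 = AdjoinRoot.mk _ (C 2 * X) := by
    rw [pow_succ (w 2 0), w_sq]
    simp [map_ofNat, mul_comm]
  intro h0
  have h2 := congrArg (fun p ↦ (AdjoinRoot.modByMonicHom hmonic p).coeff 1) (hw3.symm.trans h0)
  rw [AdjoinRoot.modByMonicHom_mk, (modByMonic_eq_self_iff hmonic).2 hdeg, map_zero] at h2
  exact absurd (by simpa using h2) (by decide : (2 : ZMod 4) ≠ 0)

theorem w_dvd_or_w_dvd_sub_one (x : Rring 2 0) : w 2 0 ∣ x ∨ w 2 0 ∣ x - 1 := by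
  induction x using AdjoinRoot.induction_on with
  | ih p =>
    obtain ⟨q, hq⟩ := X_dvd_sub_C (p := p)
    have hp : AdjoinRoot.mk _ p = AdjoinRoot.of _ (p.coeff 0) + w 2 0 * AdjoinRoot.mk _ q := by
      rw [← sub_eq_iff_eq_add']
      simpa using congrArg (AdjoinRoot.mk _) hq
    have hparity : ∀ a : ZMod 4, ∃ k, a = 2 * k ∨ a = 2 * k + 1 := by decide
    obtain ⟨k, hk | hk⟩ := hparity (p.coeff 0) <;> rw [hp, hk]
    · refine .inl ⟨w 2 0 * AdjoinRoot.of _ k + AdjoinRoot.mk _ q, ?_⟩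
      simp only [map_mul, map_ofNat]
      linear_combination -AdjoinRoot.of _ k * w_sq
    · refine .inr ⟨w 2 0 * AdjoinRoot.of _ k + AdjoinRoot.mk _ q, ?_⟩
      simp only [map_add, map_mul, map_ofNat, map_one]
      linear_combination -AdjoinRoot.of _ k * w_sq

theorem stmt2 (x : Rring 2 0) (hx : ¬ IsUnit x) :
    orderOf (x + 1) = addOrderOf x :=
  orderOf_add_one_eq_addOrderOf w_sq w_pow_four w_pow_three_ne_zero w_dvd_or_w_dvd_sub_one hx
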